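/- Let k ≥ 1 and n ≥ 2k + 3. Then the number of 2k-NN graphs on ZMod n at Hamming distance exactly 4 from x* is at least n, i.e., |X_2| ≥ n. -/

import Mathlib

open MeasureTheory Filter
open scoped ENNReal NNReal

noncomputable section

/-- Cyclic distance on `ZMod n`: `min(m, n-m)` where `m` is the representative of `a-b`. -/
def cycDist {n : ℕ} (a b : ZMod n) : ℕ := min (a - b).val (b - a).val

/-- The `2k`-nearest-neighbor graph on `ZMod n` associated to a permutation `σ`. -/
def knnGraph (n k : ℕ) (σ : Equiv.Perm (ZMod n)) : SimpleGraph (ZMod n) where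
  Adj u v := u ≠ v ∧ cycDist (σ.symm u) (σ.symm v) ≤ k
  symm := by
    refine ⟨fun u v h => ?_⟩
    refine ⟨h.1.symm, ?_⟩
    unfold cycDist at *
    omega
  loopless := by exact ⟨fun u h => h.1 rfl⟩

/-- The set of all `2k`-NN graphs on `ZMod n`. -/
def knnGraphs (n k : ℕ) : Set (SimpleGraph (ZMod n)) := Set.range (knnGraph n k)

/-- The hidden `2k`-NN graph: the one associated to the identity permutation. -/
def xstar (n k : ℕ) : SimpleGraph (ZMod n) := knnGraph n k (Equiv.refl _)

/-- Hamming distance between two graphs: the number of unordered pairs adjacent in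
exactly one of them. -/
def gdist {n : ℕ} (x y : SimpleGraph (ZMod n)) : ℕ := (symmDiff x.edgeSet y.edgeSet).ncard

/-- `2k`-NN graphs at Hamming distance `2Δ` from the hidden one. -/
def XDelta (n k Δ : ℕ) : Set (SimpleGraph (ZMod n)) :=
  {x | x ∈ knnGraphs n k ∧ gdist x (xstar n k) = 2 * Δ}

open scoped Classical in
/-- The hidden `2k`-NN graph model: independent edge weights, with law `P` on the edges of
the hidden graph `x` and law `Q` elsewhere. -/
def edgeMeasure (n : ℕ) (P Q : Measure ℝ) (x : SimpleGraph (ZMod n)) :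
    Measure (Sym2 (ZMod n) → ℝ) :=
  if h : n = 0 then 0 else
    haveI : NeZero n := ⟨h⟩
    Measure.pi fun e => if e ∈ x.edgeSet then P else Q

/-- `⟨L, x⟩ = Σ_{e edge of x} log (dP/dQ)(w_e)`. -/
def score (n : ℕ) (P Q : Measure ℝ) (x : SimpleGraph (ZMod n))
    (w : Sym2 (ZMod n) → ℝ) : ℝ :=
  ∑ᶠ e ∈ x.edgeSet, llr P Q (w e)

/-- `Σ_{e edge of x} w_e`. -/
def wsum (n : ℕ) (x : SimpleGraph (ZMod n)) (w : Sym2 (ZMod n) → ℝ) : ℝ :=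
  ∑ᶠ e ∈ x.edgeSet, w e

/-- The order-1/2 Rényi divergence `α(P,Q) = -2 log ∫ √(dP/dQ) dQ`. -/
def renyiHalf (P Q : Measure ℝ) : ℝ :=
  -2 * Real.log (∫ t, Real.sqrt ((P.rnDeriv Q) t).toReal ∂Q)

/-- The Kullback-Leibler divergence `D(P‖Q) = ∫ log (dP/dQ) dP`. -/
def klDivR (P Q : Measure ℝ) : ℝ := ∫ t, llr P Q t ∂P



/-! Swapping the labels of two cyclically consecutive positions `c` and `c + 1` changes exactly four
pairs: `c` gains `c + k + 1` and loses `c - k`, while `c + 1` gains `c - k` and loses `c + k + 1`.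
The `n` graphs obtained this way are pairwise distinct as soon as `n ≥ 2k + 3` (for `n = 2k + 2`,
the swaps at `c` and at `c + k + 1` give the same graph). Writing every vertex as `c + a` with
`a < n` turns all of this into linear arithmetic on the offsets. -/

namespace ZMod

variable {n : ℕ}

theorem natCast_inj_of_lt {a b : ℕ} (ha : a < n) (hb : b < n) : (a : ZMod n) = b ↔ a = b := by
  rw [natCast_eq_natCast_iff', Nat.mod_eq_of_lt ha, Nat.mod_eq_of_lt hb]

theorem val_natCast_sub_natCast {a b : ℕ} (ha : a < n) (hb : b < n) :
    ((b : ZMod n) - a).val = if a ≤ b then b - a else b + n - a := by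
  split_ifs with hab
  · rw [← Nat.cast_sub hab, val_natCast_of_lt (by omega)]
  · have : (b : ZMod n) - a = ((b + n - a : ℕ) : ZMod n) := by
      rw [Nat.cast_sub (by omega), Nat.cast_add, natCast_self, add_zero]
    rw [this, val_natCast_of_lt (by omega)]

theorem exists_eq_add_natCast [NeZero n] (c u : ZMod n) : ∃ a < n, u = c + a :=
  ⟨(u - c).val, val_lt _, by rw [natCast_zmod_val, add_sub_cancel]⟩

theorem sym2_add_natCast_eq_iff (c : ZMod n) {a b a' b' : ℕ} (ha : a < n) (hb : b < n)
    (ha' : a' < n) (hb' : b' < n) :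
    s(c + a, c + b) = s(c + a', c + b') ↔ (a = a' ∧ b = b') ∨ (a = b' ∧ b = a') := by
  simp only [Sym2.eq_iff, add_right_inj, natCast_inj_of_lt ha ha', natCast_inj_of_lt hb hb',
    natCast_inj_of_lt ha hb', natCast_inj_of_lt hb ha']

theorem swap_add_one_add_natCast (hn : 1 < n) (c : ZMod n) {a : ℕ} (ha : a < n) :
    Equiv.swap c (c + 1) (c + a) =
      c + ((if a = 0 then 1 else if a = 1 then 0 else a : ℕ) : ZMod n) := by
  have h0 : c + a = c ↔ a = 0 := by
    rw [add_eq_left, ← Nat.cast_zero, natCast_inj_of_lt ha (by omega)]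
  have h1 : c + a = c + 1 ↔ a = 1 := by
    rw [add_right_inj, ← Nat.cast_one, natCast_inj_of_lt ha hn]
  rw [Equiv.swap_apply_def]
  split_ifs <;> simp_all

end ZMod

section

open ZMod

variable {n k : ℕ}

theorem cycDist_le_iff [NeZero n] (x y : ZMod n) :
    cycDist x y ≤ k ↔ (y - x).val ≤ k ∨ n ≤ (y - x).val + k := by
  have := val_lt (y - x)
  rw [cycDist, ← neg_sub y x, neg_val]
  split_ifs with h
  · simp [h]
  · omega

theorem cycDist_add_natCast_le_iff [NeZero n] (c : ZMod n) {a b : ℕ} (ha : a < n) (hb : b < n) :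
    cycDist (c + (a : ZMod n)) (c + (b : ZMod n)) ≤ k ↔
      (a ≤ b + k ∧ b ≤ a + k) ∨ a + n ≤ b + k ∨ b + n ≤ a + k := by
  rw [cycDist_le_iff, add_sub_add_left_eq_sub, val_natCast_sub_natCast ha hb]
  split_ifs <;> omega

-- The offset `n - k` stands for `-k`.
def swapDiff (n k : ℕ) (c : ZMod n) : Set (Sym2 (ZMod n)) :=
  (fun p : ℕ × ℕ => s(c + (p.1 : ZMod n), c + (p.2 : ZMod n))) '' ({0, 1} ×ˢ {k + 1, n - k})

theorem mem_swapDiff_iff (hk : 1 ≤ k) (hkn : k + 1 < n) (c : ZMod n) {a b : ℕ} (ha : a < n)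
    (hb : b < n) :
    s(c + a, c + b) ∈ swapDiff n k c ↔
      (a ≤ 1 ∧ (b = k + 1 ∨ b = n - k)) ∨ (b ≤ 1 ∧ (a = k + 1 ∨ a = n - k)) := by
  simp only [swapDiff, Set.mem_image, Set.mem_prod, Set.mem_insert_iff, Set.mem_singleton_iff,
    Prod.exists]
  constructor
  · rintro ⟨i, j, ⟨hi, hj⟩, h⟩
    rw [sym2_add_natCast_eq_iff c (by omega) (by omega) ha hb] at h
    omega
  · rintro (⟨hi, hj⟩ | ⟨hi, hj⟩)
    · exact ⟨a, b, ⟨by omega, hj⟩, rfl⟩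
    · exact ⟨b, a, ⟨by omega, hj⟩, Sym2.eq_swap⟩

theorem ncard_swapDiff (hk : 1 ≤ k) (hn : 2 * k + 2 ≤ n) (c : ZMod n) :
    (swapDiff n k c).ncard = 4 := by
  rw [swapDiff, Set.InjOn.ncard_image, Set.ncard_prod, Set.ncard_pair (by omega),
    Set.ncard_pair (by omega)]
  rintro ⟨i, j⟩ ⟨hi, hj⟩ ⟨i', j'⟩ ⟨hi', hj'⟩ h
  simp only [Set.mem_insert_iff, Set.mem_singleton_iff] at hi hj hi' hj'
  rw [sym2_add_natCast_eq_iff c (by omega) (by omega) (by omega) (by omega)] at h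
  simp only [Prod.mk.injEq]
  omega

theorem edgeSet_symmDiff_swap (hk : 1 ≤ k) (hn : 2 * k + 2 ≤ n) (c : ZMod n) :
    symmDiff (knnGraph n k (Equiv.swap c (c + 1))).edgeSet (xstar n k).edgeSet =
      swapDiff n k c := by
  have : NeZero n := ⟨by omega⟩
  have swap_lt {a : ℕ} (ha : a < n) : (if a = 0 then 1 else if a = 1 then 0 else a) < n := by
    split_ifs <;> omega
  ext e
  induction e using Sym2.ind with
  | _ u v =>
  obtain ⟨a, ha, rfl⟩ := exists_eq_add_natCast c u
  obtain ⟨b, hb, rfl⟩ := exists_eq_add_natCast c v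
  rw [mem_swapDiff_iff hk (by omega) c ha hb, Set.mem_symmDiff]
  simp only [xstar, knnGraph, SimpleGraph.mem_edgeSet, Equiv.symm_swap, Equiv.refl_symm,
    Equiv.refl_apply, swap_add_one_add_natCast (by omega) c ha,
    swap_add_one_add_natCast (by omega) c hb,
    cycDist_add_natCast_le_iff c (swap_lt ha) (swap_lt hb), cycDist_add_natCast_le_iff c ha hb,
    ne_eq, add_right_inj, natCast_inj_of_lt ha hb]
  split_ifs <;> omega

theorem knnGraph_swap_injective (hk : 1 ≤ k) (hn : 2 * k + 3 ≤ n) :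
    Function.Injective fun c : ZMod n => knnGraph n k (Equiv.swap c (c + 1)) := by
  have : NeZero n := ⟨by omega⟩
  intro c c' h
  have hdiff : swapDiff n k c' = swapDiff n k c := by
    rw [← edgeSet_symmDiff_swap hk (by omega), ← edgeSet_symmDiff_swap hk (by omega)]
    exact congrArg (fun G : SimpleGraph (ZMod n) => symmDiff G.edgeSet (xstar n k).edgeSet) h.symm
  obtain ⟨a, ha, rfl⟩ := exists_eq_add_natCast c c'
  -- The pairs `{c', c' + k + 1}` and `{c', c' - k}` both lie in `swapDiff n k c` only if `c' = c`.
  have edge_mem {j : ℕ} (hj : j = k + 1 ∨ j = n - k) :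
      s(c + (a : ZMod n), c + (((a + j) % n : ℕ) : ZMod n)) ∈ swapDiff n k c := by
    rw [natCast_mod, Nat.cast_add, ← add_assoc, ← hdiff]
    simpa only [Nat.cast_zero, add_zero] using (mem_swapDiff_iff hk (by omega) (c + (a : ZMod n))
      (show 0 < n by omega) (show j < n by omega)).2 (by omega)
  have h1 := edge_mem (Or.inl rfl)
  have h2 := edge_mem (Or.inr rfl)
  rw [mem_swapDiff_iff hk (by omega) c ha (Nat.mod_lt _ (by omega)), Nat.add_mod_eq_ite,
    Nat.mod_eq_of_lt ha, Nat.mod_eq_of_lt (by omega)] at h1 h2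
  have : a = 0 := by split_ifs at h1 h2 <;> omega
  simp [this]

theorem knnGraph_swap_mem_XDelta_two (hk : 1 ≤ k) (hn : 2 * k + 2 ≤ n) (c : ZMod n) :
    knnGraph n k (Equiv.swap c (c + 1)) ∈ XDelta n k 2 :=
  ⟨⟨_, rfl⟩, by rw [gdist, edgeSet_symmDiff_swap hk hn, ncard_swapDiff hk hn]⟩

/-- **Tightness of the counting exponent at `Δ = 2` (Section 2.1).**
For `k ≥ 1` and `n ≥ 2k+3`, there are at least `n` distinct `2k`-NN graphs at Hamming
distance exactly `4` from `x*`, i.e. `|X_2| ≥ n`. -/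
theorem card_XDelta_two_ge (n k : ℕ) (hk : 1 ≤ k) (hn : 2 * k + 3 ≤ n) :
    n ≤ (XDelta n k 2).ncard := by
  have : NeZero n := ⟨by omega⟩
  calc n = (Set.univ : Set (ZMod n)).ncard := by rw [Set.ncard_univ, Nat.card_zmod]
    _ ≤ (XDelta n k 2).ncard :=
      Set.ncard_le_ncard_of_injOn _ (fun c _ => knnGraph_swap_mem_XDelta_two hk (by omega) c)
        (knnGraph_swap_injective hk hn).injOn

end
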